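/- If there exist constants B > 0 and C > 0 such that the Mertens summation function satisfies |M(x)| ≤ C·x^{1/2}·(log x)^{B+1} for all real x ≥ 2, then the Riemann hypothesis holds: every zero s of the Riemann zeta function with 0 < Re s < 1 satisfies Re s = 1/2. -/

import Mathlib

open ArithmeticFunction

/-- The Mertens summation function `M(x) = ∑_{k ≤ x} μ(k)` for real `x`. -/
noncomputable def mertens (x : ℝ) : ℤ := ∑ k ∈ Finset.Icc 1 ⌊x⌋₊, moebius k

/-!
If `M(x) = O(x^a)`, Abel summation writes `1/ζ(s) = ∑ μ(n) n^{-s}` as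
`s ∫_1^∞ M(t) t^{-s-1} dt` for `Re s > 1`, and this Mellin-type integral is holomorphic on
`Re s > a`. By the identity theorem `ζ(s) · s ∫_1^∞ M(t) t^{-s-1} dt = 1` on `Re s > a`, so `ζ`
has no zeros there. The hypothesis gives this for every `a > 1/2`, and the functional equation
reflects zeros with `Re s < 1/2` to zeros with `Re s > 1/2`.
-/

open Finset Filter Asymptotics Complex MeasureTheory Topology
open scoped ArithmeticFunction.Moebius

section PartialSums

variable (f : ℕ → ℂ)

lemma sum_Icc_one_floor_eq_zero_of_lt_one {t : ℝ} (ht : t < 1) :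
    ∑ k ∈ Icc 1 ⌊t⌋₊, f k = 0 := by
  simp [Nat.floor_eq_zero.mpr ht]

lemma locallyIntegrableOn_sum_Icc_one_floor :
    LocallyIntegrableOn (fun t : ℝ ↦ ∑ k ∈ Icc 1 ⌊t⌋₊, f k) (Set.Ioi 0) := by
  have := locallyIntegrableOn_mul_sum_Icc f (m := 1) le_rfl
    (locallyIntegrableOn_const (1 : ℂ) (s := Set.Ici 0))
  simp only [one_mul] at this
  exact this.mono_set Set.Ioi_subset_Ici_self

lemma integral_sum_Icc_one_floor_mul_cpow_eq_mellin (s : ℂ) :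
    ∫ t in Set.Ioi (1 : ℝ), (∑ k ∈ Icc 1 ⌊t⌋₊, f k) * (t : ℂ) ^ (-(s + 1)) =
      mellin (fun t : ℝ ↦ ∑ k ∈ Icc 1 ⌊t⌋₊, f k) (-s) := by
  rw [mellin, ← integral_Ici_eq_integral_Ioi,
    setIntegral_eq_of_subset_of_forall_sdiff_eq_zero measurableSet_Ioi
      (Set.Ici_subset_Ioi.mpr one_pos)]
  · refine setIntegral_congr_fun measurableSet_Ici fun t _ ↦ ?_
    rw [smul_eq_mul, mul_comm, neg_add']
  · rintro t ⟨-, ht⟩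
    rw [sum_Icc_one_floor_eq_zero_of_lt_one f (not_le.mp ht), smul_zero]

lemma differentiableAt_integral_sum_Icc_one_floor_mul_cpow {a : ℝ}
    (hO : (fun t : ℝ ↦ ∑ k ∈ Icc 1 ⌊t⌋₊, f k) =O[atTop] (· ^ a))
    {s : ℂ} (hs : a < s.re) :
    DifferentiableAt ℂ (fun z : ℂ ↦
      ∫ t in Set.Ioi (1 : ℝ), (∑ k ∈ Icc 1 ⌊t⌋₊, f k) * (t : ℂ) ^ (-(z + 1))) s := by
  simp_rw [integral_sum_Icc_one_floor_mul_cpow_eq_mellin]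
  have hbot : (fun t : ℝ ↦ ∑ k ∈ Icc 1 ⌊t⌋₊, f k) =O[nhdsWithin 0 (Set.Ioi 0)]
      (· ^ (-(-s.re - 1))) := by
    refine (EventuallyEq.isBigO ?_).trans (isBigO_zero _ _)
    filter_upwards [Ioo_mem_nhdsGT one_pos] with t ht
    exact sum_Icc_one_floor_eq_zero_of_lt_one f ht.2
  have hmellin := mellin_differentiableAt_of_isBigO_rpow (a := -a) (s := -s)
    (locallyIntegrableOn_sum_Icc_one_floor f) (by simpa using hO) (by simpa using hs) hbot
    (by simp)
  exact hmellin.comp s differentiableAt_id.neg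

end PartialSums

lemma isBigO_rpow_mul_log_rpow_rpow {a c : ℝ} (hca : c < a) (b : ℝ) :
    (fun x : ℝ ↦ x ^ c * Real.log x ^ b) =O[atTop] (· ^ a) := by
  have hlog := (isLittleO_log_rpow_rpow_atTop b (sub_pos.mpr hca)).isBigO
  refine ((isBigO_refl (· ^ c) atTop).mul hlog).congr' .rfl ?_
  filter_upwards [eventually_gt_atTop 0] with x hx
  rw [← Real.rpow_add hx, add_sub_cancel]

lemma mertens_eq_sum (x : ℝ) : (mertens x : ℂ) = ∑ k ∈ Icc 1 ⌊x⌋₊, (μ k : ℂ) := by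
  simp [mertens]

lemma abs_mertens_le (x : ℝ) : |mertens x| ≤ ⌊x⌋₊ := by
  calc |mertens x| ≤ ∑ k ∈ Icc 1 ⌊x⌋₊, |μ k| := abs_sum_le_sum_abs _ _
    _ ≤ ∑ k ∈ Icc 1 ⌊x⌋₊, 1 := sum_le_sum fun k _ ↦ abs_moebius_le_one
    _ = ⌊x⌋₊ := by simp

noncomputable def mertensTransform (s : ℂ) : ℂ :=
  s * ∫ t in Set.Ioi (1 : ℝ), (mertens t : ℂ) * (t : ℂ) ^ (-(s + 1))

lemma LSeries_moebius_eq_mertensTransform {s : ℂ} (hs : 1 < s.re) :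
    LSeries (fun n ↦ (μ n : ℂ)) s = mertensTransform s := by
  have hO : (fun n : ℕ ↦ ∑ k ∈ Icc 1 n, (μ k : ℂ)) =O[atTop]
      fun n ↦ (n : ℝ) ^ (1 : ℝ) := by
    refine IsBigO.of_bound 1 (Eventually.of_forall fun n ↦ ?_)
    have := abs_mertens_le n
    simp only [mertens, Nat.floor_natCast] at this
    simp only [Real.rpow_one, one_mul, Real.norm_natCast]
    exact_mod_cast this
  simp_rw [mertensTransform, mertens_eq_sum]
  exact LSeries_eq_mul_integral _ zero_le_one hs (LSeriesSummable_moebius_iff.mpr hs) hO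

lemma differentiableAt_mertensTransform {a : ℝ}
    (hM : (fun x ↦ (mertens x : ℂ)) =O[atTop] (· ^ a)) {s : ℂ} (hs : a < s.re) :
    DifferentiableAt ℂ mertensTransform s := by
  simp_rw [mertens_eq_sum] at hM
  unfold mertensTransform
  simp_rw [mertens_eq_sum]
  exact differentiableAt_id.mul
    (differentiableAt_integral_sum_Icc_one_floor_mul_cpow _ hM hs)

lemma differentiable_update_sub_one_mul_riemannZeta :
    Differentiable ℂ (Function.update (fun s ↦ (s - 1) * riemannZeta s) 1 1) := by
  have hne {s : ℂ} (hs : s ≠ 1) :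
      DifferentiableAt ℂ (Function.update (fun s ↦ (s - 1) * riemannZeta s) 1 1) s := by
    refine ((differentiableAt_id.sub_const 1).mul
      (differentiableAt_riemannZeta hs)).congr_of_eventuallyEq ?_
    filter_upwards [isOpen_compl_singleton.mem_nhds hs] with z hz
    exact Function.update_of_ne hz _ _
  intro s
  rcases ne_or_eq s 1 with hs | rfl
  · exact hne hs
  · refine (analyticAt_of_differentiable_on_punctured_nhds_of_continuousAt ?_ ?_).differentiableAt
    · filter_upwards [self_mem_nhdsWithin] with z hz using hne hz
    · simpa only [continuousAt_update_same] using riemannZeta_residue_one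

theorem riemannZeta_mul_mertensTransform {a : ℝ}
    (hM : (fun x ↦ (mertens x : ℂ)) =O[atTop] (· ^ a)) {s : ℂ} (hs : a < s.re)
    (hs1 : s ≠ 1) :
    riemannZeta s * mertensTransform s = 1 := by
  -- `ζ` has a pole at `1`, which may lie in the half-plane: the identity theorem is applied to
  -- `(s - 1) ζ(s)`, continued holomorphically across `s = 1`.
  set Z := Function.update (fun s ↦ (s - 1) * riemannZeta s) 1 1
  set H : ℂ → ℂ := fun z ↦ Z z * mertensTransform z - (z - 1)
  have hH : AnalyticOnNhd ℂ H {z | a < z.re} := by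
    refine DifferentiableOn.analyticOnNhd (fun z hz ↦ ?_)
      (isOpen_lt continuous_const continuous_re)
    exact ((differentiable_update_sub_one_mul_riemannZeta z).mul
      (differentiableAt_mertensTransform hM hz) |>.sub
      (differentiableAt_id.sub_const 1)).differentiableWithinAt
  set z₀ : ℂ := max a 1 + 1
  have hz₀ : max a 1 < z₀.re := by simp [z₀]
  have hH₀ : H =ᶠ[𝓝 z₀] 0 := by
    filter_upwards [(isOpen_lt continuous_const continuous_re).mem_nhds hz₀] with z hz
    have hz1 : 1 < z.re := (le_max_right a 1).trans_lt hz
    have hzne : z ≠ 1 := by rintro rfl; simp at hz1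
    simp only [H, Z, Function.update_of_ne hzne, Pi.zero_apply, mul_assoc,
      ← LSeries_moebius_eq_mertensTransform hz1, ← LSeries_zeta_eq_riemannZeta hz1,
      LSeries_zeta_mul_Lseries_moebius hz1, mul_one, sub_self]
  have := hH.eqOn_zero_of_preconnected_of_eventuallyEq_zero
    (convex_halfSpace_re_gt a).isPreconnected ((le_max_left a 1).trans_lt hz₀) hH₀ hs
  simp only [H, Z, Function.update_of_ne hs1, Pi.zero_apply, mul_assoc, sub_eq_zero] at this
  exact (mul_eq_left₀ (sub_ne_zero.mpr hs1)).mp this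

theorem riemannZeta_ne_zero_of_isBigO_mertens {a : ℝ}
    (hM : (fun x ↦ (mertens x : ℂ)) =O[atTop] (· ^ a)) {s : ℂ} (hs : a < s.re) :
    riemannZeta s ≠ 0 := by
  rcases eq_or_ne s 1 with rfl | hs1
  · exact riemannZeta_one_ne_zero
  · exact left_ne_zero_of_mul_eq_one (riemannZeta_mul_mertensTransform hM hs hs1)

lemma riemannZeta_one_sub_eq_zero {s : ℂ} (hs : riemannZeta s = 0) (h0 : 0 < s.re) :
    riemannZeta (1 - s) = 0 := by
  have hs1 : s ≠ 1 := by rintro rfl; exact riemannZeta_one_ne_zero hs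
  have hsn (n : ℕ) : s ≠ -n := by rintro rfl; simp at h0; linarith [n.cast_nonneg (α := ℝ)]
  rw [riemannZeta_one_sub hsn hs1, hs, mul_zero]

lemma isBigO_mertens_of_abs_le {b c C : ℝ}
    (hM : ∀ x : ℝ, 2 ≤ x → |(mertens x : ℝ)| ≤ C * x ^ c * Real.log x ^ b)
    {a : ℝ} (ha : c < a) :
    (fun x ↦ (mertens x : ℂ)) =O[atTop] (· ^ a) := by
  refine IsBigO.trans (IsBigO.of_bound |C| ?_) (isBigO_rpow_mul_log_rpow_rpow ha b)
  filter_upwards [eventually_ge_atTop 2] with x hx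
  rw [norm_intCast, Real.norm_eq_abs, ← abs_mul, ← mul_assoc]
  exact (hM x hx).trans (le_abs_self _)

theorem riemann_hypothesis_of_mertens_bound
    (h : ∃ B : ℝ, 0 < B ∧ ∃ C : ℝ, 0 < C ∧ ∀ x : ℝ, 2 ≤ x →
      |(mertens x : ℝ)| ≤ C * x ^ ((1 : ℝ) / 2) * Real.log x ^ (B + 1)) :
    ∀ s : ℂ, riemannZeta s = 0 → 0 < s.re → s.re < 1 → s.re = 1 / 2 := by
  obtain ⟨B, -, C, -, hM⟩ := h
  have hzero {s : ℂ} (hs : 1 / 2 < s.re) : riemannZeta s ≠ 0 := by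
    obtain ⟨a, ha, has⟩ := exists_between hs
    exact riemannZeta_ne_zero_of_isBigO_mertens (isBigO_mertens_of_abs_le hM ha) has
  intro s hs h0 _
  by_contra hne
  rcases lt_or_gt_of_ne hne with hlt | hgt
  · exact hzero (by rw [sub_re, one_re]; linarith) (riemannZeta_one_sub_eq_zero hs h0)
  · exact hzero hgt hs
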